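/- Let E be an open set of ℝ^N and p > 1. Let (v_n) be a sequence bounded in L^p(E) and v ∈ L^p(E) such that for all k > 0, T_k(v_n) converges weakly to T_k(v) in L^p(E). Then v_n converges weakly to v in L^p(E). -/

import Mathlib

open MeasureTheory Filter Real
open scoped ENNReal NNReal

/-- Truncation at level `k`: `T_k(s) = min(k, |s|) · sign(s)`. -/
noncomputable def trunc (k : ℝ) (s : ℝ) : ℝ := min k |s| * Real.sign s

lemma trunc_eq_self {k s : ℝ} (h : |s| ≤ k) : trunc k s = s := by
  unfold trunc
  rw [min_eq_right h]
  rcases lt_trichotomy s 0 with hs | hs | hs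
  · rw [Real.sign_of_neg hs, abs_of_neg hs]; ring
  · simp [hs]
  · rw [Real.sign_of_pos hs, abs_of_pos hs, mul_one]

lemma trunc_eq_max_min {k : ℝ} (hk : 0 ≤ k) (s : ℝ) :
    trunc k s = max (-k) (min k s) := by
  unfold trunc
  rcases lt_trichotomy s 0 with h | h | h
  · rw [Real.sign_of_neg h, abs_of_neg h, min_eq_right (h.le.trans hk), mul_neg_one]
    rw [show -(k ⊓ -s) = -k ⊔ s from by
      rcases le_total k (-s) with h2 | h2 <;>
        [rw [min_eq_left h2, max_eq_left (by linarith)];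
         rw [min_eq_right h2, max_eq_right (by linarith), neg_neg]]]
  · simp [h, Real.sign_zero, max_eq_right (neg_nonpos_of_nonneg hk), min_eq_right hk]
  · rw [Real.sign_of_pos h, abs_of_pos h, mul_one, max_eq_right]
    exact (neg_nonpos_of_nonneg hk).trans (le_min hk h.le)

lemma abs_trunc_le {k : ℝ} (hk : 0 ≤ k) (s : ℝ) : |trunc k s| ≤ |s| := by
  unfold trunc
  rw [abs_mul]
  rcases lt_trichotomy s 0 with h | h | h
  · rw [Real.sign_of_neg h, abs_neg, abs_one, mul_one,
      abs_of_nonneg (le_min hk (abs_nonneg s))]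
    exact min_le_right _ _
  · simp [h]
  · rw [Real.sign_of_pos h, abs_one, mul_one, abs_of_nonneg (le_min hk (abs_nonneg s))]
    exact min_le_right _ _

section Holder

variable {α : Type*} [MeasurableSpace α] {μ : Measure α}

lemma conj_inv_add {p q : ℝ} (hpq : p.HolderConjugate q) :
    1 / (1 : ℝ≥0∞) = 1 / ENNReal.ofReal p + 1 / ENNReal.ofReal q := by
  rw [one_div, one_div, one_div, inv_one, ← ENNReal.ofReal_inv_of_pos hpq.pos,
    ← ENNReal.ofReal_inv_of_pos hpq.symm.pos,
    ← ENNReal.ofReal_add (inv_nonneg.2 hpq.nonneg) (inv_nonneg.2 hpq.symm.nonneg)]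
  rw [hpq.inv_add_inv_eq_one, ENNReal.ofReal_one]

lemma integrable_mul' {p q : ℝ} (hpq : p.HolderConjugate q) {f g : α → ℝ}
    (hf : MemLp f (ENNReal.ofReal p) μ) (hg : MemLp g (ENNReal.ofReal q) μ) :
    Integrable (fun x => f x * g x) μ := by
  rw [← memLp_one_iff_integrable]
  haveI : ENNReal.HolderTriple (ENNReal.ofReal p) (ENNReal.ofReal q) 1 :=
    ⟨by simpa [one_div] using (conj_inv_add hpq).symm⟩
  exact MemLp.smul (r := 1) hg hf

lemma abs_integral_mul_le' {p q : ℝ} (hpq : p.HolderConjugate q) {f g : α → ℝ}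
    (hf : MemLp f (ENNReal.ofReal p) μ) (hg : MemLp g (ENNReal.ofReal q) μ) :
    |∫ x, f x * g x ∂μ| ≤ (eLpNorm f (ENNReal.ofReal p) μ).toReal *
      (eLpNorm g (ENNReal.ofReal q) μ).toReal := by
  have h1 : |∫ x, f x * g x ∂μ| ≤ ∫ x, ‖f x‖ * ‖g x‖ ∂μ := by
    calc |∫ x, f x * g x ∂μ| ≤ ∫ x, ‖f x * g x‖ ∂μ :=
          (Real.norm_eq_abs _ ▸ norm_integral_le_integral_norm _ : _)
      _ = ∫ x, ‖f x‖ * ‖g x‖ ∂μ := by simp_rw [norm_mul]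
  refine h1.trans ?_
  have h2 := integral_mul_norm_le_Lp_mul_Lq hpq hf hg
  have hfe : eLpNorm f (ENNReal.ofReal p) μ
      = ENNReal.ofReal ((∫ a, ‖f a‖ ^ p ∂μ) ^ p⁻¹) := by
    have := hf.eLpNorm_eq_integral_rpow_norm (by simpa using hpq.pos)
      ENNReal.ofReal_ne_top
    rwa [ENNReal.toReal_ofReal hpq.nonneg] at this
  have hge : eLpNorm g (ENNReal.ofReal q) μ
      = ENNReal.ofReal ((∫ a, ‖g a‖ ^ q ∂μ) ^ q⁻¹) := by
    have := hg.eLpNorm_eq_integral_rpow_norm (by simpa using hpq.symm.pos)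
      ENNReal.ofReal_ne_top
    rwa [ENNReal.toReal_ofReal hpq.symm.nonneg] at this
  rw [hfe, hge, ENNReal.toReal_ofReal (by positivity), ENNReal.toReal_ofReal (by positivity)]
  simpa [one_div] using h2

lemma memℒp_trunc {k : ℝ} (hk : 0 ≤ k) {P : ℝ≥0∞} {f : α → ℝ} (hf : MemLp f P μ) :
    MemLp (fun x => trunc k (f x)) P μ := by
  refine MemLp.of_le hf ?_ (Eventually.of_forall fun x => ?_)
  · have hc : Continuous fun s : ℝ => max (-k) (min k s) :=
      continuous_const.max (continuous_const.min continuous_id)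
    have : (fun x => trunc k (f x)) = fun x => max (-k) (min k (f x)) := by
      funext x; exact trunc_eq_max_min hk _
    rw [this]
    exact hc.comp_aestronglyMeasurable hf.1
  · simpa [Real.norm_eq_abs] using abs_trunc_le hk (f x)

lemma key_estimate {p q k : ℝ} (hpq : p.HolderConjugate q) (hk : 0 < k) {f g : α → ℝ}
    (hfm : StronglyMeasurable f)
    (hf : MemLp f (ENNReal.ofReal p) μ) (hg : MemLp g (ENNReal.ofReal q) μ) :
    |(∫ x, f x * g x ∂μ) - ∫ x, trunc k (f x) * g x ∂μ| ≤
      (eLpNorm (fun x => f x - trunc k (f x)) (ENNReal.ofReal p) μ).toReal *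
      (eLpNorm (({x | k < |f x|}).indicator g) (ENNReal.ofReal q) μ).toReal := by
  have hTf : MemLp (fun x => trunc k (f x)) (ENNReal.ofReal p) μ := memℒp_trunc hk.le hf
  have hsub : MemLp (fun x => f x - trunc k (f x)) (ENNReal.ofReal p) μ := hf.sub hTf
  have hA : MeasurableSet {x | k < |f x|} :=
    measurableSet_lt measurable_const hfm.measurable.abs
  have hgA : MemLp (({x | k < |f x|}).indicator g) (ENNReal.ofReal q) μ := hg.indicator hA
  have hpt : ∀ x, f x * g x - trunc k (f x) * g x =
      (f x - trunc k (f x)) * ({x | k < |f x|}).indicator g x := by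
    intro x
    by_cases hx : k < |f x|
    · rw [Set.indicator_of_mem (show x ∈ {x | k < |f x|} from hx) g]; ring
    · push_neg at hx
      rw [trunc_eq_self hx]; ring
  have heq : (∫ x, f x * g x ∂μ) - ∫ x, trunc k (f x) * g x ∂μ =
      ∫ x, (f x - trunc k (f x)) * ({x | k < |f x|}).indicator g x ∂μ := by
    rw [← integral_sub (integrable_mul' hpq hf hg) (integrable_mul' hpq hTf hg)]
    exact integral_congr_ae (Eventually.of_forall hpt)
  rw [heq]
  exact abs_integral_mul_le' hpq hsub hgA

end Holder

/-- If `(vₙ)` is bounded in `Lᵖ(E)` (`E ⊆ ℝᴺ` open, `p > 1`), `v ∈ Lᵖ(E)`, and for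
each `k > 0` the truncations `T_k(vₙ)` converge weakly in `Lᵖ(E)` to `T_k(v)`,
then `vₙ ⇀ v` weakly in `Lᵖ(E)`.  Weak convergence in `Lᵖ` is expressed by testing
against arbitrary functions of `L^{p'}(E)`, `p' = p/(p-1)`. -/
theorem weak_convergence_of_truncations
    {N : ℕ} (hN : 1 ≤ N) (E : Set (EuclideanSpace ℝ (Fin N))) (hEopen : IsOpen E)
    (p : ℝ) (hp : 1 < p)
    (v : ℕ → EuclideanSpace ℝ (Fin N) → ℝ) (w : EuclideanSpace ℝ (Fin N) → ℝ)
    (hmeas : ∀ n, AEStronglyMeasurable (v n) (volume.restrict E))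
    (hvLp : ∀ n, MemLp (v n) (ENNReal.ofReal p) (volume.restrict E))
    (hwLp : MemLp w (ENNReal.ofReal p) (volume.restrict E))
    (hbdd : ∃ C : ℝ≥0∞, C < ⊤ ∧ ∀ n,
      eLpNorm (v n) (ENNReal.ofReal p) (volume.restrict E) ≤ C)
    (htrunc : ∀ k : ℝ, 0 < k →
      ∀ g : EuclideanSpace ℝ (Fin N) → ℝ,
        MemLp g (ENNReal.ofReal (p / (p - 1))) (volume.restrict E) →
        Tendsto (fun n => ∫ x in E, trunc k (v n x) * g x) atTop
          (nhds (∫ x in E, trunc k (w x) * g x))) :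
    ∀ g : EuclideanSpace ℝ (Fin N) → ℝ,
      MemLp g (ENNReal.ofReal (p / (p - 1))) (volume.restrict E) →
      Tendsto (fun n => ∫ x in E, v n x * g x) atTop
        (nhds (∫ x in E, w x * g x)) := by
  intro g hg
  obtain ⟨C, hCtop, hC⟩ := hbdd
  set μ : Measure (EuclideanSpace ℝ (Fin N)) := volume.restrict E with hμdef
  have hppos : (0 : ℝ) < p := lt_trans one_pos hp
  have hpq : p.HolderConjugate (p / (p - 1)) := Real.HolderConjugate.conjExponent hp
  have hq1 : 1 < p / (p - 1) := hpq.symm.lt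
  have hP1 : 1 ≤ ENNReal.ofReal p := ENNReal.one_le_ofReal.2 hp.le
  have hPt : (ENNReal.ofReal p).toReal = p := ENNReal.toReal_ofReal hppos.le
  have hP0 : ENNReal.ofReal p ≠ 0 := (ENNReal.ofReal_pos.2 hppos).ne'
  have hQ1 : 1 ≤ ENNReal.ofReal (p / (p - 1)) := ENNReal.one_le_ofReal.2 hq1.le
  -- measurable representatives
  set f' : ℕ → EuclideanSpace ℝ (Fin N) → ℝ := fun n => (hmeas n).mk (v n) with hf'def
  have hfm : ∀ n, StronglyMeasurable (f' n) := fun n => (hmeas n).stronglyMeasurable_mk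
  have hfe : ∀ n, v n =ᵐ[μ] f' n := fun n => (hmeas n).ae_eq_mk
  set w' : EuclideanSpace ℝ (Fin N) → ℝ := hwLp.1.mk w with hw'def
  have hwm : StronglyMeasurable w' := hwLp.1.stronglyMeasurable_mk
  have hwe : w =ᵐ[μ] w' := hwLp.1.ae_eq_mk
  have hf'Lp : ∀ n, MemLp (f' n) (ENNReal.ofReal p) μ := fun n => (hvLp n).ae_eq (hfe n)
  have hw'Lp : MemLp w' (ENNReal.ofReal p) μ := hwLp.ae_eq hwe
  set C' := C + eLpNorm w (ENNReal.ofReal p) μ with hC'def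
  have hC'top : C' ≠ ⊤ := (ENNReal.add_lt_top.2 ⟨hCtop, hwLp.2⟩).ne
  have hfC : ∀ n, eLpNorm (f' n) (ENNReal.ofReal p) μ ≤ C' := fun n => by
    rw [← eLpNorm_congr_ae (hfe n)]; exact (hC n).trans le_self_add
  have hwC : eLpNorm w' (ENNReal.ofReal p) μ ≤ C' := by
    rw [← eLpNorm_congr_ae hwe]; exact le_add_self
  -- transfer of integrals
  have hIv : ∀ n, (∫ x in E, v n x * g x) = ∫ x, f' n x * g x ∂μ := fun n =>
    integral_congr_ae ((hfe n).mono fun x hx => by simp only [hx])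
  have hIw : (∫ x in E, w x * g x) = ∫ x, w' x * g x ∂μ :=
    integral_congr_ae (hwe.mono fun x hx => by simp only [hx])
  have hITv : ∀ (k : ℝ) (n : ℕ), (∫ x in E, trunc k (v n x) * g x)
      = ∫ x, trunc k (f' n x) * g x ∂μ := fun k n =>
    integral_congr_ae ((hfe n).mono fun x hx => by simp only [hx])
  have hITw : ∀ (k : ℝ), (∫ x in E, trunc k (w x) * g x)
      = ∫ x, trunc k (w' x) * g x ∂μ := fun k =>
    integral_congr_ae (hwe.mono fun x hx => by simp only [hx])
  rw [Metric.tendsto_atTop]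
  intro ε hε
  set B := 2 * C'.toReal + 1 with hBdef
  have hB : 0 < B := by positivity
  set ε' := ε / (3 * B) with hε'def
  have hε'pos : 0 < ε' := by positivity
  obtain ⟨δ, hδpos, hδ⟩ := hg.eLpNorm_indicator_le hQ1 ENNReal.ofReal_ne_top hε'pos
  -- choice of the truncation level k
  set η := (ENNReal.ofReal δ) ^ p⁻¹ with hηdef
  have hδ0 : ENNReal.ofReal δ ≠ 0 := (ENNReal.ofReal_pos.2 hδpos).ne'
  have hη0 : η ≠ 0 :=
    (ENNReal.rpow_pos (ENNReal.ofReal_pos.2 hδpos) ENNReal.ofReal_ne_top).ne'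
  have hηtop : η ≠ ⊤ :=
    ENNReal.rpow_ne_top_of_nonneg (inv_nonneg.2 hppos.le) ENNReal.ofReal_ne_top
  set k := (C' / η).toReal + 1 with hkdef
  have hk : 0 < k := by positivity
  have hkof : C' / η ≤ ENNReal.ofReal k := by
    rw [ENNReal.le_ofReal_iff_toReal_le (ENNReal.div_lt_top hC'top hη0).ne hk.le]
    simp [hkdef]
  have hmulη : (ENNReal.ofReal k)⁻¹ * C' ≤ η := by
    rw [ENNReal.inv_mul_le_iff (ENNReal.ofReal_pos.2 hk).ne' ENNReal.ofReal_ne_top]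
    rw [ENNReal.div_le_iff hη0 hηtop] at hkof
    exact hkof
  have hksmall : ∀ h : EuclideanSpace ℝ (Fin N) → ℝ, AEStronglyMeasurable h μ →
      eLpNorm h (ENNReal.ofReal p) μ ≤ C' → μ {x | k < |h x|} ≤ ENNReal.ofReal δ := by
    intro h hhm hhC
    have h1 : μ {x | k < |h x|} ≤ μ {x | ENNReal.ofReal k ≤ (‖h x‖₊ : ℝ≥0∞)} := by
      apply measure_mono
      intro x hx
      simp only [Set.mem_setOf_eq] at hx ⊢
      calc ENNReal.ofReal k ≤ ENNReal.ofReal |h x| := ENNReal.ofReal_le_ofReal hx.le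
        _ = (‖h x‖₊ : ℝ≥0∞) := by rw [← Real.norm_eq_abs, ofReal_norm, enorm_eq_nnnorm]
    refine h1.trans ?_
    refine (meas_ge_le_mul_pow_eLpNorm_enorm μ hP0 ENNReal.ofReal_ne_top hhm
      (ENNReal.ofReal_pos.2 hk).ne' (fun h => absurd h ENNReal.ofReal_ne_top)).trans ?_
    rw [hPt]
    calc (ENNReal.ofReal k)⁻¹ ^ p * eLpNorm h (ENNReal.ofReal p) μ ^ p
        ≤ (ENNReal.ofReal k)⁻¹ ^ p * C' ^ p :=
          mul_le_mul_right (ENNReal.rpow_le_rpow hhC hppos.le) _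
      _ = ((ENNReal.ofReal k)⁻¹ * C') ^ p := (ENNReal.mul_rpow_of_nonneg _ _ hppos.le).symm
      _ ≤ η ^ p := ENNReal.rpow_le_rpow hmulη hppos.le
      _ = ENNReal.ofReal δ := by rw [hηdef, ENNReal.rpow_inv_rpow hppos.ne']
  -- the uniform truncation-error estimate
  have main : ∀ (h : EuclideanSpace ℝ (Fin N) → ℝ), StronglyMeasurable h →
      MemLp h (ENNReal.ofReal p) μ → eLpNorm h (ENNReal.ofReal p) μ ≤ C' →
      |(∫ x, h x * g x ∂μ) - ∫ x, trunc k (h x) * g x ∂μ| ≤ ε / 3 := by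
    intro h hhm hhLp hhC
    refine (key_estimate hpq hk hhm hhLp hg).trans ?_
    have hTh : MemLp (fun x => trunc k (h x)) (ENNReal.ofReal p) μ := memℒp_trunc hk.le hhLp
    have b1 : (eLpNorm (fun x => h x - trunc k (h x)) (ENNReal.ofReal p) μ).toReal ≤ B := by
      have h1 : eLpNorm (fun x => h x - trunc k (h x)) (ENNReal.ofReal p) μ ≤ C' + C' := by
        refine (eLpNorm_sub_le hhLp.1 hTh.1 hP1).trans (add_le_add hhC ?_)
        refine (eLpNorm_mono_ae (Eventually.of_forall fun x => ?_)).trans hhC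
        simpa [Real.norm_eq_abs] using abs_trunc_le hk.le (h x)
      calc (eLpNorm (fun x => h x - trunc k (h x)) (ENNReal.ofReal p) μ).toReal
          ≤ (C' + C').toReal :=
            ENNReal.toReal_mono (by simp [ENNReal.add_eq_top, hC'top]) h1
        _ = 2 * C'.toReal := by
            rw [ENNReal.toReal_add hC'top hC'top]; ring
        _ ≤ B := by rw [hBdef]; linarith
    have hA : MeasurableSet {x | k < |h x|} :=
      measurableSet_lt measurable_const hhm.measurable.abs
    have b2 : (eLpNorm (({x | k < |h x|}).indicator g) (ENNReal.ofReal (p / (p - 1))) μ).toReal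
        ≤ ε' := by
      have h2 := hδ _ hA (hksmall h hhm.aestronglyMeasurable hhC)
      calc (eLpNorm (({x | k < |h x|}).indicator g) (ENNReal.ofReal (p / (p - 1))) μ).toReal
          ≤ (ENNReal.ofReal ε').toReal := ENNReal.toReal_mono ENNReal.ofReal_ne_top h2
        _ = ε' := ENNReal.toReal_ofReal hε'pos.le
    calc (eLpNorm (fun x => h x - trunc k (h x)) (ENNReal.ofReal p) μ).toReal *
        (eLpNorm (({x | k < |h x|}).indicator g) (ENNReal.ofReal (p / (p - 1))) μ).toReal
        ≤ B * ε' := mul_le_mul b1 b2 ENNReal.toReal_nonneg hB.le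
      _ = ε / 3 := by rw [hε'def]; field_simp
  have e1 : ∀ n, |(∫ x, f' n x * g x ∂μ) - ∫ x, trunc k (f' n x) * g x ∂μ| ≤ ε / 3 :=
    fun n => main (f' n) (hfm n) (hf'Lp n) (hfC n)
  have e3 : |(∫ x, w' x * g x ∂μ) - ∫ x, trunc k (w' x) * g x ∂μ| ≤ ε / 3 :=
    main w' hwm hw'Lp hwC
  -- the middle term from the hypothesis
  have hmid := htrunc k hk g hg
  rw [Metric.tendsto_atTop] at hmid
  obtain ⟨n₀, hn₀⟩ := hmid (ε / 3) (by positivity)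
  refine ⟨n₀, fun n hn => ?_⟩
  have h2 := hn₀ n hn
  rw [Real.dist_eq, hITv k n, hITw k] at h2
  rw [Real.dist_eq, hIv n, hIw]
  have t1 := e1 n
  have habs : |(∫ x, f' n x * g x ∂μ) - ∫ x, w' x * g x ∂μ| ≤
      |(∫ x, f' n x * g x ∂μ) - ∫ x, trunc k (f' n x) * g x ∂μ| +
      |(∫ x, trunc k (f' n x) * g x ∂μ) - ∫ x, trunc k (w' x) * g x ∂μ| +
      |(∫ x, trunc k (w' x) * g x ∂μ) - ∫ x, w' x * g x ∂μ| := by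
    have := abs_sub_le (∫ x, f' n x * g x ∂μ) (∫ x, trunc k (f' n x) * g x ∂μ)
      (∫ x, w' x * g x ∂μ)
    have h4 := abs_sub_le (∫ x, trunc k (f' n x) * g x ∂μ) (∫ x, trunc k (w' x) * g x ∂μ)
      (∫ x, w' x * g x ∂μ)
    linarith
  have e3' : |(∫ x, trunc k (w' x) * g x ∂μ) - ∫ x, w' x * g x ∂μ| ≤ ε / 3 := by
    rw [abs_sub_comm]; exact e3
  calc |(∫ x, f' n x * g x ∂μ) - ∫ x, w' x * g x ∂μ| ≤ _ + _ + _ := habs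
    _ < ε := by linarith
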